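/- Let α ≥ ω₁ be a regular cardinal and 0 < n < ω. Then every subspace T of C⁻(α,n) such that ∞ ∈ T and ∞ lies in the closure of T \ {∞} is homeomorphic to C⁻(α,n). -/

import Mathlib

universe u v

/-- `CIdx K m` represents the set `αⁿ` for `n = m+1`, where `K` plays the role of `α`. -/
def CIdx (K : Type u) : ℕ → Type u
  | 0 => K
  | m + 1 => K × CIdx K m

/-- Given a subset `U` of `(α × αⁿ) ∪ {∞}` and `ξ`, the set `{x ∈ αⁿ : (ξ,x) ∈ U} ∪ {∞}`. -/
def cslice {K J : Type u} (U : Set (Option (K × J))) (ξ : K) : Set (Option J) :=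
  insert none (Option.some '' {x : J | Option.some (ξ, x) ∈ U})

/-- The openness predicate of the space `C⁻(α, m+1)`. -/
def CIsOpen (K : Type u) : (m : ℕ) → Set (Option (CIdx K m)) → Prop
  | 0, U => none ∈ U → Cardinal.mk ((Option.some ⁻¹' U)ᶜ : Set K) < Cardinal.mk K
  | m + 1, U => none ∈ U →
      Cardinal.mk (({ξ : K | CIsOpen K m (cslice U ξ)}ᶜ : Set K)) < Cardinal.mk K

theorem cslice_mono {K J : Type u} {U V : Set (Option (K × J))} (h : U ⊆ V) (ξ : K) :
    cslice U ξ ⊆ cslice V ξ := by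
  intro z hz
  rcases hz with hz | hz
  · exact Or.inl hz
  · rcases hz with ⟨x, hx, rfl⟩
    exact Or.inr ⟨x, h hx, rfl⟩

theorem none_mem_cslice {K J : Type u} (U : Set (Option (K × J))) (ξ : K) :
    none ∈ cslice U ξ := Set.mem_insert _ _

theorem cisOpen_of_none_not_mem (K : Type u) (m : ℕ) (U : Set (Option (CIdx K m)))
    (h : none ∉ U) : CIsOpen K m U := by
  cases m with
  | zero => exact fun hU => absurd hU h
  | succ m => exact fun hU => absurd hU h

theorem cisOpen_mono (K : Type u) (m : ℕ) :
    ∀ U V : Set (Option (CIdx K m)), CIsOpen K m U → U ⊆ V → (none ∈ V → none ∈ U) →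
      CIsOpen K m V := by
  induction m with
  | zero =>
    intro U V hU hUV hnone hV
    refine lt_of_le_of_lt (Cardinal.mk_le_mk_of_subset ?_) (hU (hnone hV))
    intro k hk hU'
    exact hk (hUV hU')
  | succ m ih =>
    intro U V hU hUV hnone hV
    refine lt_of_le_of_lt (Cardinal.mk_le_mk_of_subset ?_) (hU (hnone hV))
    intro ξ hξ hopen
    exact hξ (ih _ _ hopen (cslice_mono hUV ξ) (fun _ => none_mem_cslice U ξ))

theorem cslice_univ {K J : Type u} (ξ : K) :
    cslice (Set.univ : Set (Option (K × J))) ξ = Set.univ := by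
  ext z
  cases z with
  | none => simp [cslice]
  | some j => simp [cslice]

theorem cisOpen_univ (K : Type u) [Nonempty K] (m : ℕ) : CIsOpen K m Set.univ := by
  cases m with
  | zero =>
    intro _
    show Cardinal.mk ((Option.some ⁻¹' (Set.univ : Set (Option K)))ᶜ : Set K) < Cardinal.mk K
    simp only [Set.preimage_univ, Set.compl_univ, Cardinal.mk_emptyCollection]
    exact Cardinal.mk_ne_zero K |>.bot_lt
  | succ m =>
    intro _
    have h : ({ξ : K | CIsOpen K m (cslice (Set.univ : Set (Option (CIdx K (m+1)))) ξ)}ᶜ : Set K)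
        = ∅ := by
      ext ξ
      simp only [Set.mem_compl_iff, Set.mem_setOf_eq, Set.mem_empty_iff_false, iff_false, not_not]
      exact cast (congrArg (CIsOpen K m) (cslice_univ (K := K) (J := CIdx K m) ξ).symm)
        (cisOpen_univ K m)
    rw [h, Cardinal.mk_emptyCollection]
    exact Cardinal.mk_ne_zero K |>.bot_lt

theorem some_mem_cslice_iff {K J : Type u} (U : Set (Option (K × J))) (ξ : K) (x : J) :
    some x ∈ cslice U ξ ↔ some (ξ, x) ∈ U := by
  simp [cslice]

theorem cslice_inter {K J : Type u} (U V : Set (Option (K × J))) (ξ : K) :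
    cslice (U ∩ V) ξ = cslice U ξ ∩ cslice V ξ := by
  ext z
  cases z with
  | none => simp [none_mem_cslice]
  | some x => simp [some_mem_cslice_iff]

theorem cisOpen_inter (K : Type u) [Infinite K] (m : ℕ) :
    ∀ U V : Set (Option (CIdx K m)), CIsOpen K m U → CIsOpen K m V →
      CIsOpen K m (U ∩ V) := by
  induction m with
  | zero =>
    intro U V hU hV h
    have hsub : ((Option.some ⁻¹' (U ∩ V))ᶜ : Set K) ⊆
        (Option.some ⁻¹' U)ᶜ ∪ (Option.some ⁻¹' V)ᶜ := by
      intro k hk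
      by_contra hc
      exact hk ⟨Classical.byContradiction fun h' => hc (Or.inl h'),
        Classical.byContradiction fun h' => hc (Or.inr h')⟩
    refine lt_of_le_of_lt (Cardinal.mk_le_mk_of_subset hsub) ?_
    refine lt_of_le_of_lt (Cardinal.mk_union_le _ _) ?_
    exact Cardinal.add_lt_of_lt (Cardinal.aleph0_le_mk K) (hU h.1) (hV h.2)
  | succ m ih =>
    intro U V hU hV h
    have hsub : ({ξ : K | CIsOpen K m (cslice (U ∩ V) ξ)}ᶜ : Set K) ⊆
        {ξ : K | CIsOpen K m (cslice U ξ)}ᶜ ∪ {ξ : K | CIsOpen K m (cslice V ξ)}ᶜ := by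
      intro ξ hξ
      by_contra hc
      have hU' : CIsOpen K m (cslice U ξ) := Classical.byContradiction fun h' => hc (Or.inl h')
      have hV' : CIsOpen K m (cslice V ξ) := Classical.byContradiction fun h' => hc (Or.inr h')
      exact hξ (cast (congrArg (CIsOpen K m) (cslice_inter (J := CIdx K m) U V ξ).symm)
        (ih _ _ hU' hV'))
    refine lt_of_le_of_lt (Cardinal.mk_le_mk_of_subset hsub) ?_
    refine lt_of_le_of_lt (Cardinal.mk_union_le _ _) ?_
    exact Cardinal.add_lt_of_lt (Cardinal.aleph0_le_mk K) (hU h.1) (hV h.2)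

theorem cisOpen_sUnion (K : Type u) (m : ℕ) (S : Set (Set (Option (CIdx K m))))
    (hS : ∀ U ∈ S, CIsOpen K m U) : CIsOpen K m (⋃₀ S) := by
  by_cases h : none ∈ ⋃₀ S
  · obtain ⟨U, hUS, hU⟩ := h
    exact cisOpen_mono K m U _ (hS U hUS) (Set.subset_sUnion_of_mem hUS) (fun _ => hU)
  · exact cisOpen_of_none_not_mem _ _ _ h

/-- The space `C⁻(α, m+1)` from the paper (so `m = 0` gives `C(α)` itself);
`K` plays the role of the set of ordinals `< α` and `none` plays the role of `∞`. -/
def CTop (K : Type u) [Infinite K] (m : ℕ) : TopologicalSpace (Option (CIdx K m)) where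
  IsOpen := CIsOpen K m
  isOpen_univ := cisOpen_univ K m
  isOpen_inter := cisOpen_inter K m
  isOpen_sUnion := cisOpen_sUnion K m

instance instCTop (K : Type u) [Infinite K] (m : ℕ) : TopologicalSpace (Option (CIdx K m)) :=
  CTop K m

/-!
Write `𝓕ₙ` for the filter on `αⁿ` of traces of neighbourhoods of `∞`, so that the open sets of
`C⁻(α,n)` containing `∞` are the sets `{∞} ∪ A` with `A ∈ 𝓕ₙ`. For `S = T \ {∞}` the hypothesis
says that `S` meets every member of `𝓕ₙ`, and `T` is homeomorphic to `C⁻(α,n)` as soon as some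
bijection `S ≃ αⁿ` carries the trace of `𝓕ₙ` on `S` onto `𝓕ₙ`.

Such a bijection is found by induction on `n`. The filter `𝓕ₙ₊₁` is the Fubini product of the
filter `𝓕₁` of co-small sets with `𝓕ₙ`, so the set `P` of those `ξ` whose fibre `S_ξ` meets every
member of `𝓕ₙ` meets every co-small set, i.e. `|P| = α`; bijections `P ≃ α` and `S_ξ ≃ αⁿ` then
assemble into one on `S ∩ (P × αⁿ)`. The rest of `S` is `𝓕ₙ₊₁`-null, and it is absorbed into the
fibre `{ξ₀} × S_ξ₀` over one `ξ₀ ∈ P`, which is null as well and has cardinality `α`.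
-/

open Cardinal Filter Set

section Cocard

def Filter.cocard (α : Type*) (c : Cardinal) (hc : ℵ₀ ≤ c := by exact aleph0_le_mk _) :
    Filter α :=
  comk (fun s => #s < c) (by simpa using aleph0_pos.trans_le hc)
    (fun _ ht _ hst => (mk_le_mk_of_subset hst).trans_lt ht)
    (fun s hs t ht => (mk_union_le s t).trans_lt (add_lt_of_lt hc hs ht))

variable {α β : Type u} {c : Cardinal} {hc : ℵ₀ ≤ c}

theorem Filter.mem_cocard {s : Set α} : s ∈ cocard α c hc ↔ #(sᶜ : Set α) < c := Iff.rfl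

theorem Filter.le_mk_of_frequently_cocard {S : Set α} (hS : ∃ᶠ x in cocard α c hc, x ∈ S) :
    c ≤ #S := by
  by_contra! h
  exact hS (show Sᶜ ∈ cocard α c hc from mem_cocard.2 (by rwa [compl_compl]))

theorem Filter.comap_val_cocard (S : Set α) :
    comap ((↑) : S → α) (cocard α c hc) = cocard S c hc := by
  ext A
  rw [mem_comap_iff_compl, mem_cocard, mem_cocard, compl_compl,
    mk_image_eq Subtype.val_injective]

theorem Filter.map_equiv_cocard (e : α ≃ β) :
    map e (cocard α c hc) = cocard β c hc := by
  ext A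
  rw [mem_map, mem_cocard, mem_cocard, ← preimage_compl, mk_preimage_equiv]

end Cocard

theorem Filter.eventually_comap_val {α : Type*} {S : Set α} {l : Filter α} {p : S → Prop} :
    (∀ᶠ x in comap (↑) l, p x) ↔ ∀ᶠ x in l, ∀ h : x ∈ S, p ⟨x, h⟩ := by
  simp only [eventually_comap, Subtype.forall]
  exact eventually_congr (.of_forall fun x =>
    ⟨fun h hx => h x hx rfl, fun h _ hy hyx => by subst hyx; exact h hy⟩)

section Fiberwise

variable {α β γ δ : Type*}

def fiberwiseEquiv {S : Set (α × β)} {P : Set α} (ψ : P ≃ γ)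
    (e : ∀ a : P, (Prod.mk (a : α) ⁻¹' S) ≃ δ) : ↥(S ∩ Prod.fst ⁻¹' P) ≃ γ × δ where
  toFun p := (ψ ⟨p.1.1, p.2.2⟩, e ⟨p.1.1, p.2.2⟩ ⟨p.1.2, p.2.1⟩)
  invFun r := ⟨((ψ.symm r.1 : α), ((e (ψ.symm r.1)).symm r.2 : β)),
    ((e (ψ.symm r.1)).symm r.2).2, (ψ.symm r.1).2⟩
  left_inv p := by
    apply Subtype.ext
    change ((ψ.symm (ψ ⟨p.1.1, p.2.2⟩) : α),
      ((e (ψ.symm (ψ ⟨p.1.1, p.2.2⟩))).symm (e ⟨p.1.1, p.2.2⟩ ⟨p.1.2, p.2.1⟩) : β)) = p.1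
    rw [ψ.symm_apply_apply, Equiv.symm_apply_apply]
  right_inv r := by
    change (ψ (ψ.symm r.1), e (ψ.symm r.1) ((e (ψ.symm r.1)).symm r.2)) = r
    rw [Equiv.apply_symm_apply, Equiv.apply_symm_apply]

theorem map_fiberwiseEquiv_comap_curry {S : Set (α × β)} {P : Set α}
    {F : Filter α} {G : Filter β} {F' : Filter γ} {G' : Filter δ}
    (ψ : P ≃ γ) (hψ : map ψ (comap (↑) F) = F')
    (e : ∀ a : P, (Prod.mk (a : α) ⁻¹' S) ≃ δ) (he : ∀ a, map (e a) (comap (↑) G) = G') :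
    map (fiberwiseEquiv ψ e) (comap (↑) (F.curry G)) = F'.curry G' := by
  ext A
  have fiber (a : P) : (∀ᶠ d in G', (ψ a, d) ∈ A) ↔
      ∀ᶠ b in G, ∀ h : (a.1, b) ∈ S, (ψ a, e a ⟨b, h⟩) ∈ A := by
    rw [← he a, eventually_map, eventually_comap_val]
    exact Iff.rfl
  rw [mem_curry_iff, ← hψ, eventually_map, eventually_comap_val]
  change (∀ᶠ p in comap (↑) (F.curry G), fiberwiseEquiv ψ e p ∈ A) ↔ _
  rw [eventually_comap_val, eventually_curry_iff]
  refine eventually_congr (.of_forall fun a => ?_)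
  by_cases ha : a ∈ P
  · simp only [fiber ⟨a, ha⟩, ha, forall_true_left]
    exact eventually_congr (.of_forall fun b => ⟨fun h hS => h ⟨hS, ha⟩, fun h hSP => h hSP.1⟩)
  · simp [ha]

end Fiberwise

section Absorb

variable {α β : Type*}

theorem exists_equiv_eqOn_of_mk_le {S' S N : Set α} (hS : S' ⊆ S) (hN : N ⊆ S')
    (hcard : #S ≤ #N) : ∃ b : S ≃ S', ∀ x : S, ↑x ∈ S' \ N → (b x : α) = x := by
  let s : Set S := {x | ↑x ∈ S' \ N}
  let f : s ↪ S' := ⟨fun x => ⟨x, x.2.1⟩, fun x y h =>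
    Subtype.ext (Subtype.ext (by simpa using congrArg Subtype.val h))⟩
  have hs : #(sᶜ : Set S) = #S := by
    refine le_antisymm (mk_set_le _) (hcard.trans (mk_le_of_injective (f := fun x : N =>
      (⟨⟨x, hS (hN x.2)⟩, fun h => h.2 x.2⟩ : (sᶜ : Set S))) fun x y h => ?_))
    exact Subtype.ext (congrArg (fun z : (sᶜ : Set S) => (z : α)) h)
  have hf : #((range f)ᶜ : Set S') = #S := by
    refine le_antisymm ((mk_set_le _).trans (mk_le_mk_of_subset hS))
      (hcard.trans (mk_le_of_injective (f := fun x : N =>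
        (⟨⟨x, hN x.2⟩, fun ⟨y, hy⟩ =>
          y.2.2 (by rw [show ((y : S) : α) = x from congrArg Subtype.val hy]; exact x.2)⟩ :
          ((range f)ᶜ : Set S'))) fun x y h => ?_))
    exact Subtype.ext (congrArg (fun z : ((range f)ᶜ : Set S') => (z : α)) h)
  obtain ⟨b, hb⟩ := extend_function f (Cardinal.eq.1 (hs.trans hf.symm))
  exact ⟨b, fun x hx => congrArg Subtype.val (hb ⟨x, hx⟩)⟩

theorem exists_equiv_map_comap_of_null {F : Filter α} {G : Filter β} {S' S N : Set α}
    (hS : S' ⊆ S) (hN : N ⊆ S') (hnull : ∀ᶠ x in F, x ∉ N ∧ x ∉ S \ S') (hcard : #S ≤ #N)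
    (e' : S' ≃ β) (he' : map e' (comap (↑) F) = G) : ∃ e : S ≃ β, map e (comap (↑) F) = G := by
  obtain ⟨b, hb⟩ := exists_equiv_eqOn_of_mk_le hS hN hcard
  have hb_eventually : inclusion hS ∘ b =ᶠ[comap (↑) F] id :=
    eventually_comap_val.2 <| hnull.mono fun x hx hxS =>
      Subtype.ext (hb ⟨x, hxS⟩ ⟨by_contra fun h => hx.2 ⟨hxS, h⟩, hx.1⟩)
  have hb_map : map b (comap (↑) F) = comap (↑) F :=
    calc map b (comap (↑) F)
        = comap (inclusion hS) (map (inclusion hS) (map b (comap (↑) F))) :=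
          (comap_map (inclusion_injective hS)).symm
      _ = comap (inclusion hS) (comap (↑) F) := by
          rw [map_map, map_congr hb_eventually, map_id]
      _ = comap (↑) F := by rw [comap_comap]; rfl
  exact ⟨b.trans e', by rw [Equiv.coe_trans, ← map_map, hb_map, he']⟩

end Absorb

section OptionTopology

variable {X Y : Type*} [TopologicalSpace (Option X)] [TopologicalSpace (Option Y)]
  {F : Filter X} {G : Filter Y} {T : Set (Option X)}

theorem frequently_of_none_mem_closure
    (hX : ∀ U : Set (Option X), IsOpen U ↔ (none ∈ U → some ⁻¹' U ∈ F))
    (h : none ∈ closure (T \ {none})) : ∃ᶠ x in F, some x ∈ T := by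
  refine frequently_iff.2 fun {A} hA => ?_
  have hopen : IsOpen (insert none (some '' A)) :=
    (hX _).2 fun _ => mem_of_superset hA fun x hx => Or.inr ⟨x, hx, rfl⟩
  obtain ⟨z, hzA, hzT, hz⟩ := mem_closure_iff.1 h _ hopen (mem_insert _ _)
  rcases hzA with rfl | ⟨x, hx, rfl⟩
  · exact absurd rfl hz
  · exact ⟨x, hx, hzT⟩

theorem isOpen_subtype_iff_of_none_mem
    (hX : ∀ U : Set (Option X), IsOpen U ↔ (none ∈ U → some ⁻¹' U ∈ F))
    (h : none ∈ T) (W : Set T) :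
    IsOpen W ↔ (⟨none, h⟩ ∈ W →
      (fun x : some ⁻¹' T => (⟨some x, x.2⟩ : T)) ⁻¹' W ∈ comap (↑) F) := by
  refine ⟨?_, fun hW => isOpen_induced_iff.2 ?_⟩
  · rintro hW hn
    obtain ⟨V, hV, rfl⟩ := isOpen_induced_iff.1 hW
    exact preimage_mem_comap ((hX V).1 hV hn)
  by_cases hn : ⟨none, h⟩ ∈ W
  · obtain ⟨A, hA, hAW⟩ := hW hn
    refine ⟨Subtype.val '' W ∪ some '' A,
      (hX _).2 fun _ => mem_of_superset hA fun x hx => Or.inr ⟨x, hx, rfl⟩, ?_⟩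
    ext ⟨z, hz⟩
    refine ⟨?_, fun hzW => Or.inl ⟨_, hzW, rfl⟩⟩
    rintro (hzW | ⟨x, hx, rfl⟩)
    · rwa [Subtype.val_injective.mem_set_image] at hzW
    · exact hAW (show ((⟨x, hz⟩ : some ⁻¹' T) : X) ∈ A from hx)
  · refine ⟨Subtype.val '' W, (hX _).2 fun ⟨z, hzW, hz⟩ => ?_,
      preimage_image_eq _ Subtype.val_injective⟩
    obtain ⟨z, hzT⟩ := z
    subst hz
    exact absurd hzW hn

def equivOptionOfNoneMem (h : none ∈ T) (e : some ⁻¹' T ≃ Y) : T ≃ Option Y where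
  toFun
    | ⟨none, _⟩ => none
    | ⟨some x, hx⟩ => some (e ⟨x, hx⟩)
  invFun
    | none => ⟨none, h⟩
    | some y => ⟨some (e.symm y), (e.symm y).2⟩
  left_inv := by rintro ⟨_ | x, hx⟩ <;> simp
  right_inv := by rintro (_ | y) <;> simp

theorem nonempty_homeomorph_of_map_comap
    (hX : ∀ U : Set (Option X), IsOpen U ↔ (none ∈ U → some ⁻¹' U ∈ F))
    (hY : ∀ U : Set (Option Y), IsOpen U ↔ (none ∈ U → some ⁻¹' U ∈ G))
    (h : none ∈ T) (e : some ⁻¹' T ≃ Y) (he : map e (comap (↑) F) = G) :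
    Nonempty (T ≃ₜ Option Y) :=
  ⟨(equivOptionOfNoneMem h e).toHomeomorph fun s => by
    rw [isOpen_subtype_iff_of_none_mem hX h, hY, ← he]
    exact Iff.rfl⟩

end OptionTopology

section CFilter

variable (K : Type u) [Infinite K]

def cFilter : (m : ℕ) → Filter (CIdx K m)
  | 0 => cocard K #K
  | m + 1 => (cocard K #K).curry (cFilter m)

theorem cIsOpen_iff_cFilter (m : ℕ) (U : Set (Option (CIdx K m))) :
    CIsOpen K m U ↔ (none ∈ U → some ⁻¹' U ∈ cFilter K m) := by
  induction m with
  | zero => exact Iff.rfl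
  | succ m ih =>
    refine imp_congr_right fun _ => ?_
    suffices {ξ | CIsOpen K m (cslice U ξ)} = {ξ | Prod.mk ξ ⁻¹' (some ⁻¹' U) ∈ cFilter K m} by
      change _ ↔ #_ < #K
      rw [this]
      rfl
    ext ξ
    have hslice : some ⁻¹' cslice U ξ = Prod.mk ξ ⁻¹' (some ⁻¹' U) :=
      ext fun x => some_mem_cslice_iff U ξ x
    change CIsOpen K m (cslice U ξ) ↔ _
    rw [ih, hslice]
    exact imp_iff_right (none_mem_cslice U ξ)

theorem isOpen_iff_cFilter (m : ℕ) (U : Set (Option (CIdx K m))) :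
    IsOpen U ↔ (none ∈ U → some ⁻¹' U ∈ cFilter K m) :=
  cIsOpen_iff_cFilter K m U

theorem mk_cIdx (m : ℕ) : #(CIdx K m) = #K := by
  induction m with
  | zero => rfl
  | succ m ih => exact (mk_prod _ _).trans (by simp [ih])

theorem cFilter_le_cocard (m : ℕ) : cFilter K m ≤ cocard (CIdx K m) #K (aleph0_le_mk K) := by
  induction m with
  | zero => exact le_rfl
  | succ m ih =>
    intro A hA
    change A ∈ (cocard K #K _).curry (cFilter K m)
    refine mem_curry_iff.2 (Eventually.of_forall fun ξ => ih (mem_cocard.2 ?_))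
    exact (mk_preimage_of_injective _ _ (Prod.mk_right_injective ξ)).trans_lt hA

end CFilter

section Transport

variable {K : Type u} [Infinite K]

theorem exists_equiv_map_comap_cocard {S : Set K} (hS : ∃ᶠ x in cocard K #K, x ∈ S) :
    ∃ e : S ≃ K, map e (comap (↑) (cocard K #K)) = cocard K #K := by
  obtain ⟨e⟩ := Cardinal.eq.1 (le_antisymm (mk_set_le S) (le_mk_of_frequently_cocard hS))
  exact ⟨e, by rw [comap_val_cocard, map_equiv_cocard]⟩

theorem exists_equiv_map_comap_curry {J : Type u} {G : Filter J} (hJ : #J ≤ #K)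
    (hG : G ≤ cocard J #K (aleph0_le_mk K))
    (ih : ∀ {S : Set J}, (∃ᶠ x in G, x ∈ S) → ∃ e : S ≃ J, map e (comap (↑) G) = G)
    {S : Set (K × J)} (hS : ∃ᶠ p in (cocard K #K).curry G, p ∈ S) :
    ∃ e : S ≃ K × J, map e (comap (↑) ((cocard K #K).curry G)) = (cocard K #K).curry G := by
  set P : Set K := {ξ | ∃ᶠ x in G, (ξ, x) ∈ S}
  have hP : ∃ᶠ ξ in cocard K #K, ξ ∈ P := (frequently_curry_iff _).1 hS
  obtain ⟨ψ, hψ⟩ := exists_equiv_map_comap_cocard hP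
  choose e he using fun ξ : P => ih ξ.2
  obtain ⟨ξ₀, hξ₀⟩ := hP.exists
  have hnull : ∀ᶠ p in (cocard K #K).curry G,
      p ∉ Prod.mk ξ₀ '' (Prod.mk ξ₀ ⁻¹' S) ∧ p ∉ S \ (S ∩ Prod.fst ⁻¹' P) := by
    have hne : ∀ᶠ ξ in cocard K #K, ξ ≠ ξ₀ :=
      mem_cocard.2 (by simpa using one_lt_aleph0.trans_le (aleph0_le_mk K))
    rw [eventually_curry_iff]
    filter_upwards [hne] with ξ hξ
    have hN (x : J) : (ξ, x) ∉ Prod.mk ξ₀ '' (Prod.mk ξ₀ ⁻¹' S) := by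
      rintro ⟨y, -, hy⟩
      exact hξ (congrArg Prod.fst hy).symm
    by_cases hξP : ξ ∈ P
    · exact .of_forall fun x => ⟨hN x, fun h => h.2 ⟨h.1, hξP⟩⟩
    · exact (not_frequently.1 hξP).mono fun x hx => ⟨hN x, fun h => hx h.1⟩
  refine exists_equiv_map_comap_of_null inter_subset_left ?_ hnull ?_ _
    (map_fiberwiseEquiv_comap_curry ψ hψ e he)
  · rintro _ ⟨x, hx, rfl⟩
    exact ⟨hx, hξ₀⟩
  · have hKJ : #(K × J) ≤ #K := by
      rw [mk_prod, lift_id, lift_id]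
      exact (mul_le_mul' le_rfl hJ).trans (mul_eq_self (aleph0_le_mk K)).le
    rw [mk_image_eq (Prod.mk_right_injective ξ₀)]
    exact ((mk_set_le S).trans hKJ).trans (le_mk_of_frequently_cocard (hξ₀.filter_mono hG))

theorem exists_equiv_map_comap_cFilter (m : ℕ) {S : Set (CIdx K m)}
    (hS : ∃ᶠ x in cFilter K m, x ∈ S) :
    ∃ e : S ≃ CIdx K m, map e (comap (↑) (cFilter K m)) = cFilter K m := by
  induction m with
  | zero => exact exists_equiv_map_comap_cocard (K := K) hS
  | succ m ih => exact exists_equiv_map_comap_curry (mk_cIdx K m).le (cFilter_le_cocard K m) ih hS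

end Transport

theorem stmt11_general (K : Type u) [Infinite K] (m : ℕ)
    (T : Set (Option (CIdx K m))) (h1 : none ∈ T) (h2 : none ∈ closure (T \ {none})) :
    Nonempty (T ≃ₜ Option (CIdx K m)) := by
  obtain ⟨e, he⟩ := exists_equiv_map_comap_cFilter m
    (frequently_of_none_mem_closure (isOpen_iff_cFilter K m) h2)
  exact nonempty_homeomorph_of_map_comap (isOpen_iff_cFilter K m) (isOpen_iff_cFilter K m) h1 e he

/-- for a regular cardinal `α ≥ ω₁` (the cardinality of `K`) and `0 < n < ω`,
every subspace `T` of `C⁻(α,n)` with `∞ ∈ T` and `∞ ∈ closure (T \ {∞})` is homeomorphic to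
`C⁻(α,n)`.  Here `CTop K m` (the instance topology on `Option (CIdx K m)`) is `C⁻(α, m+1)`
and `none` is the point `∞`. -/
theorem stmt11 (K : Type u) [Infinite K] (hreg : (Cardinal.mk K).IsRegular)
    (hω1 : Cardinal.aleph 1 ≤ Cardinal.mk K) (m : ℕ)
    (T : Set (Option (CIdx K m))) (h1 : none ∈ T) (h2 : none ∈ closure (T \ {none})) :
    Nonempty (T ≃ₜ Option (CIdx K m)) :=
  stmt11_general K m T h1 h2
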